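/- Let 0 < p < 1, μ_1, μ_2 ∈ ℝ and σ_1, σ_2 > 0. Let φ_1 and φ_2 be the densities of N(μ_1, σ_1^2) and N(μ_2, σ_2^2), let q = 1 − p, let ρ(x) = p·φ_1(x) + q·φ_2(x), let μ = p·μ_1 + q·μ_2, and define τ(x) = (1/ρ(x))·∫_x^∞ (y − μ)·ρ(y) dy for x ∈ ℝ. Then τ is bounded: sup_{x∈ℝ} |τ(x)| ≤ C, where C is a constant depending only on p, μ_1, σ_1^2, μ_2, σ_2^2. (This τ is the Stein kernel of the two-component Gaussian mixture Y with density ρ.) -/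

import Mathlib

open MeasureTheory

/-- The density of the normal distribution `N(m, s²)`. -/
noncomputable def gaussDensity (m s x : ℝ) : ℝ :=
  (Real.sqrt (2 * Real.pi * s ^ 2))⁻¹ * Real.exp (-(x - m) ^ 2 / (2 * s ^ 2))

/-!
Since `(y - m) φ(y) = -s² φ'(y)`, each component satisfies
`∫_x^∞ (y - c) φ = s² φ(x) + (m - c) Φ̄(x)` with `Φ̄` the Gaussian tail, and for the mixture
centred at its mean the tail terms combine to `p (1 - p) (μ₁ - μ₂) (Φ̄₁(x) - Φ̄₂(x))`. So it
suffices to bound `|Φ̄₁ - Φ̄₂|` by a multiple of `φ₁ + φ₂`. To the right of both means,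
`Φ̄ᵢ(x) ≤ √(2π) σᵢ φᵢ(x)` by comparison with the Gaussian centred at `x`; to the left of both
means the same bound applies to the reflected components, since `Φ̄(x) = 1 - Φ̄(-x)` for the
reflected Gaussian; in between, `|Φ̄₁ - Φ̄₂| ≤ 1` while `φ₁` is bounded below.
-/

open ProbabilityTheory Real Set Filter Topology

section GaussDensity

variable {m s x y : ℝ}

lemma gaussDensity_eq_gaussianPDFReal (m s : ℝ) :
    gaussDensity m s = gaussianPDFReal m ⟨s ^ 2, sq_nonneg s⟩ := rfl

lemma gaussDensity_pos (hs : s ≠ 0) (m x : ℝ) : 0 < gaussDensity m s x := by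
  rw [gaussDensity_eq_gaussianPDFReal]
  exact gaussianPDFReal_pos _ _ _ (NNReal.coe_ne_zero.mp (pow_ne_zero 2 hs))

lemma gaussDensity_nonneg (m s x : ℝ) : 0 ≤ gaussDensity m s x := by
  rw [gaussDensity_eq_gaussianPDFReal]
  exact gaussianPDFReal_nonneg _ _ _

lemma integrable_gaussDensity (m s : ℝ) : Integrable (gaussDensity m s) := by
  rw [gaussDensity_eq_gaussianPDFReal]
  exact integrable_gaussianPDFReal _ _

lemma integral_gaussDensity (hs : s ≠ 0) (m : ℝ) : ∫ y, gaussDensity m s y = 1 := by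
  rw [gaussDensity_eq_gaussianPDFReal]
  exact integral_gaussianPDFReal_eq_one _ (NNReal.coe_ne_zero.mp (pow_ne_zero 2 hs))

lemma gaussDensity_neg (m s x : ℝ) : gaussDensity m s (-x) = gaussDensity (-m) s x := by
  simp only [gaussDensity]
  ring_nf

lemma gaussDensity_le_of_abs_sub_le (h : |x - m| ≤ |y - m|) :
    gaussDensity m s y ≤ gaussDensity m s x := by
  unfold gaussDensity
  gcongr _ * exp (-?_ / _)
  exact sq_le_sq.mpr h

lemma sqrt_mul_gaussDensity (hs : s ≠ 0) (m x : ℝ) :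
    √(2 * π * s ^ 2) * gaussDensity m s x = exp (-(x - m) ^ 2 / (2 * s ^ 2)) := by
  rw [gaussDensity, ← mul_assoc, mul_inv_cancel₀ (by positivity), one_mul]

lemma hasDerivAt_gaussDensity (m s x : ℝ) :
    HasDerivAt (gaussDensity m s) (-(x - m) / s ^ 2 * gaussDensity m s x) x := by
  have h : HasDerivAt (fun y => -(y - m) ^ 2 / (2 * s ^ 2)) (-(x - m) / s ^ 2) x := by
    refine ((((hasDerivAt_id' x).sub_const m).fun_pow 2).fun_neg.div_const
      (2 * s ^ 2)).congr_deriv ?_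
    push_cast
    ring
  exact (h.exp.const_mul _).congr_deriv (by unfold gaussDensity; ring)

lemma tendsto_gaussDensity_atTop (hs : s ≠ 0) (m : ℝ) :
    Tendsto (gaussDensity m s) atTop (𝓝 0) := by
  have h : Tendsto (fun y => -(y - m) ^ 2 / (2 * s ^ 2)) atTop atBot := by
    refine Tendsto.atBot_div_const (by positivity) (tendsto_neg_atTop_atBot.comp ?_)
    exact (tendsto_pow_atTop two_ne_zero).comp (tendsto_atTop_add_const_right _ (-m) tendsto_id)
  have h' := (tendsto_exp_comp_nhds_zero.mpr h).const_mul (√(2 * π * s ^ 2))⁻¹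
  rwa [mul_zero] at h'

lemma integrable_sub_mul_gaussDensity (hs : s ≠ 0) (m c : ℝ) :
    Integrable (fun y => (y - c) * gaussDensity m s y) := by
  have h := ((integrable_mul_exp_neg_mul_sq (b := (2 * s ^ 2)⁻¹) (by positivity)).comp_sub_right
    m).const_mul (√(2 * π * s ^ 2))⁻¹
  refine (h.add ((integrable_gaussDensity m s).const_mul (m - c))).congr
    (Eventually.of_forall fun y => ?_)
  simp only [gaussDensity, Pi.add_apply]
  ring_nf

lemma gaussDensity_le_mul_gaussDensity (hs : s ≠ 0) (hmx : m ≤ x) (hxy : x ≤ y) :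
    gaussDensity m s y ≤ √(2 * π * s ^ 2) * gaussDensity m s x * gaussDensity x s y := by
  rw [sqrt_mul_gaussDensity hs, gaussDensity, gaussDensity, mul_left_comm, ← exp_add,
    ← add_div]
  gcongr
  nlinarith

noncomputable def gaussTail (m s x : ℝ) : ℝ := ∫ y in Ioi x, gaussDensity m s y

lemma gaussTail_nonneg (m s x : ℝ) : 0 ≤ gaussTail m s x :=
  setIntegral_nonneg measurableSet_Ioi fun y _ => gaussDensity_nonneg m s y

lemma gaussTail_le_one (hs : s ≠ 0) (m x : ℝ) : gaussTail m s x ≤ 1 :=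
  (setIntegral_le_integral (integrable_gaussDensity m s)
    (Eventually.of_forall (gaussDensity_nonneg m s))).trans_eq (integral_gaussDensity hs m)

lemma gaussTail_add_gaussTail_neg (hs : s ≠ 0) (m x : ℝ) :
    gaussTail m s x + gaussTail (-m) s (-x) = 1 := by
  have hreflect : gaussTail (-m) s (-x) = ∫ y in Iic x, gaussDensity m s y := by
    rw [gaussTail, ← integral_comp_neg_Iic]
    simp only [gaussDensity_neg, neg_neg]
  rw [hreflect, add_comm, gaussTail, intervalIntegral.integral_Iic_add_Ioi
    (integrable_gaussDensity m s).integrableOn (integrable_gaussDensity m s).integrableOn,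
    integral_gaussDensity hs]

lemma gaussTail_le_sqrt_mul_gaussDensity (hs : s ≠ 0) (hmx : m ≤ x) :
    gaussTail m s x ≤ √(2 * π * s ^ 2) * gaussDensity m s x :=
  calc gaussTail m s x
      ≤ ∫ y in Ioi x, √(2 * π * s ^ 2) * gaussDensity m s x * gaussDensity x s y :=
        setIntegral_mono_on (integrable_gaussDensity m s).integrableOn
          ((integrable_gaussDensity x s).const_mul _).integrableOn measurableSet_Ioi
          fun y hy => gaussDensity_le_mul_gaussDensity hs hmx (le_of_lt hy)
    _ ≤ ∫ y, √(2 * π * s ^ 2) * gaussDensity m s x * gaussDensity x s y :=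
        setIntegral_le_integral ((integrable_gaussDensity x s).const_mul _)
          (Eventually.of_forall fun y => mul_nonneg (mul_nonneg (sqrt_nonneg _)
            (gaussDensity_nonneg m s x)) (gaussDensity_nonneg x s y))
    _ = √(2 * π * s ^ 2) * gaussDensity m s x := by
        rw [integral_const_mul, integral_gaussDensity hs, mul_one]

lemma setIntegral_Ioi_sub_mul_gaussDensity (hs : s ≠ 0) (m c x : ℝ) :
    ∫ y in Ioi x, (y - c) * gaussDensity m s y
      = s ^ 2 * gaussDensity m s x + (m - c) * gaussTail m s x := by
  have hderiv (y : ℝ) : HasDerivAt (fun y => -s ^ 2 * gaussDensity m s y)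
      ((y - m) * gaussDensity m s y) y :=
    ((hasDerivAt_gaussDensity m s y).const_mul _).congr_deriv (by field_simp)
  have hlim := (tendsto_gaussDensity_atTop hs m).const_mul (-s ^ 2)
  rw [mul_zero] at hlim
  have hcentred := integral_Ioi_of_hasDerivAt_of_tendsto' (a := x) (fun y _ => hderiv y)
    (integrable_sub_mul_gaussDensity hs m m).integrableOn hlim
  calc ∫ y in Ioi x, (y - c) * gaussDensity m s y
      = ∫ y in Ioi x, ((y - m) * gaussDensity m s y + (m - c) * gaussDensity m s y) := by
        congr 1 with y; ring
    _ = s ^ 2 * gaussDensity m s x + (m - c) * gaussTail m s x := by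
        rw [gaussTail, integral_add (integrable_sub_mul_gaussDensity hs m m).integrableOn
          ((integrable_gaussDensity m s).const_mul _).integrableOn, integral_const_mul, hcentred]
        ring

end GaussDensity

section TailDifference

variable {m₁ m₂ s₁ s₂ x : ℝ}

lemma abs_gaussTail_sub_gaussTail_le_of_le (hs₁ : s₁ ≠ 0) (hs₂ : s₂ ≠ 0) (h₁ : m₁ ≤ x)
    (h₂ : m₂ ≤ x) :
    |gaussTail m₁ s₁ x - gaussTail m₂ s₂ x|
      ≤ (√(2 * π * s₁ ^ 2) + √(2 * π * s₂ ^ 2))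
        * (gaussDensity m₁ s₁ x + gaussDensity m₂ s₂ x) := by
  have hT₁ := gaussTail_le_sqrt_mul_gaussDensity hs₁ h₁
  have hT₂ := gaussTail_le_sqrt_mul_gaussDensity hs₂ h₂
  have := gaussTail_nonneg m₁ s₁ x
  have := gaussTail_nonneg m₂ s₂ x
  have := gaussDensity_nonneg m₁ s₁ x
  have := gaussDensity_nonneg m₂ s₂ x
  have := sqrt_nonneg (2 * π * s₁ ^ 2)
  have := sqrt_nonneg (2 * π * s₂ ^ 2)
  rw [abs_le]
  constructor <;> nlinarith

lemma exists_abs_gaussTail_sub_gaussTail_le (hs₁ : s₁ ≠ 0) (hs₂ : s₂ ≠ 0) (m₁ m₂ : ℝ) :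
    ∃ C, ∀ x, |gaussTail m₁ s₁ x - gaussTail m₂ s₂ x|
      ≤ C * (gaussDensity m₁ s₁ x + gaussDensity m₂ s₂ x) := by
  let K := √(2 * π * s₁ ^ 2) + √(2 * π * s₂ ^ 2)
  let δ := gaussDensity m₁ s₁ (m₁ + |m₂ - m₁|)
  refine ⟨max K δ⁻¹, fun x => ?_⟩
  have hK : K * (gaussDensity m₁ s₁ x + gaussDensity m₂ s₂ x)
      ≤ max K δ⁻¹ * (gaussDensity m₁ s₁ x + gaussDensity m₂ s₂ x) :=
    mul_le_mul_of_nonneg_right (le_max_left _ _)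
      (add_nonneg (gaussDensity_nonneg m₁ s₁ x) (gaussDensity_nonneg m₂ s₂ x))
  rcases le_or_gt (max m₁ m₂) x with hright | hx
  · exact (abs_gaussTail_sub_gaussTail_le_of_le hs₁ hs₂ (le_of_max_le_left hright)
      (le_of_max_le_right hright)).trans hK
  rcases le_or_gt x (min m₁ m₂) with hleft | hx'
  · have hreflect : gaussTail m₁ s₁ x - gaussTail m₂ s₂ x
        = gaussTail (-m₂) s₂ (-x) - gaussTail (-m₁) s₁ (-x) := by
      linarith [gaussTail_add_gaussTail_neg hs₁ m₁ x, gaussTail_add_gaussTail_neg hs₂ m₂ x]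
    have h := abs_gaussTail_sub_gaussTail_le_of_le hs₂ hs₁ (neg_le_neg (le_of_le_min_right hleft))
      (neg_le_neg (le_of_le_min_left hleft))
    rw [← hreflect, ← gaussDensity_neg, ← gaussDensity_neg, neg_neg] at h
    exact h.trans_eq (by ring) |>.trans hK
  · have hmid : x ∈ uIcc m₁ m₂ := ⟨hx'.le, hx.le⟩
    have hδ_le : δ ≤ gaussDensity m₁ s₁ x := gaussDensity_le_of_abs_sub_le (by
      simpa only [add_sub_cancel_left, abs_abs] using abs_sub_left_of_mem_uIcc hmid)
    have hδ : 0 < δ := gaussDensity_pos hs₁ _ _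
    have hT₁ := gaussTail_nonneg m₁ s₁ x
    have hT₂ := gaussTail_nonneg m₂ s₂ x
    have hT₁' := gaussTail_le_one hs₁ m₁ x
    have hT₂' := gaussTail_le_one hs₂ m₂ x
    calc |gaussTail m₁ s₁ x - gaussTail m₂ s₂ x| ≤ 1 :=
          abs_sub_le_iff.mpr ⟨by linarith, by linarith⟩
      _ ≤ δ⁻¹ * gaussDensity m₁ s₁ x := by rw [le_inv_mul_iff₀ hδ, mul_one]; exact hδ_le
      _ ≤ max K δ⁻¹ * (gaussDensity m₁ s₁ x + gaussDensity m₂ s₂ x) :=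
        mul_le_mul (le_max_right _ _) (le_add_of_nonneg_right (gaussDensity_nonneg m₂ s₂ x))
          (gaussDensity_nonneg m₁ s₁ x) ((inv_pos.mpr hδ).le.trans (le_max_right _ _))

end TailDifference

lemma setIntegral_Ioi_sub_mean_mul_mixture {s₁ s₂ : ℝ} (hs₁ : s₁ ≠ 0) (hs₂ : s₂ ≠ 0)
    (p m₁ m₂ x : ℝ) :
    ∫ y in Ioi x, (y - (p * m₁ + (1 - p) * m₂)) *
        (p * gaussDensity m₁ s₁ y + (1 - p) * gaussDensity m₂ s₂ y)
      = p * s₁ ^ 2 * gaussDensity m₁ s₁ x + (1 - p) * s₂ ^ 2 * gaussDensity m₂ s₂ x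
        + p * (1 - p) * (m₁ - m₂) * (gaussTail m₁ s₁ x - gaussTail m₂ s₂ x) := by
  set μ := p * m₁ + (1 - p) * m₂
  calc ∫ y in Ioi x, (y - μ) * (p * gaussDensity m₁ s₁ y + (1 - p) * gaussDensity m₂ s₂ y)
      = ∫ y in Ioi x, (p * ((y - μ) * gaussDensity m₁ s₁ y)
          + (1 - p) * ((y - μ) * gaussDensity m₂ s₂ y)) := by
        congr 1 with y; ring
    _ = p * (s₁ ^ 2 * gaussDensity m₁ s₁ x + (m₁ - μ) * gaussTail m₁ s₁ x)
          + (1 - p) * (s₂ ^ 2 * gaussDensity m₂ s₂ x + (m₂ - μ) * gaussTail m₂ s₂ x) := by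
        rw [integral_add ((integrable_sub_mul_gaussDensity hs₁ m₁ μ).const_mul p).integrableOn
          ((integrable_sub_mul_gaussDensity hs₂ m₂ μ).const_mul (1 - p)).integrableOn,
          integral_const_mul, integral_const_mul, setIntegral_Ioi_sub_mul_gaussDensity hs₁,
          setIntegral_Ioi_sub_mul_gaussDensity hs₂]
    _ = _ := by ring

lemma exists_abs_setIntegral_Ioi_sub_mean_mul_mixture_le {p s₁ s₂ : ℝ} (hp0 : 0 ≤ p)
    (hp1 : p ≤ 1) (hs₁ : s₁ ≠ 0) (hs₂ : s₂ ≠ 0) (m₁ m₂ : ℝ) :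
    ∃ K, ∀ x, |∫ y in Ioi x, (y - (p * m₁ + (1 - p) * m₂)) *
        (p * gaussDensity m₁ s₁ y + (1 - p) * gaussDensity m₂ s₂ y)|
      ≤ K * (p * gaussDensity m₁ s₁ x + (1 - p) * gaussDensity m₂ s₂ x) := by
  obtain ⟨C, hC⟩ := exists_abs_gaussTail_sub_gaussTail_le hs₁ hs₂ m₁ m₂
  refine ⟨s₁ ^ 2 + s₂ ^ 2 + |m₁ - m₂| * C, fun x => ?_⟩
  have hq : 0 ≤ 1 - p := sub_nonneg.mpr hp1
  have hφ₁ := gaussDensity_pos hs₁ m₁ x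
  have hφ₂ := gaussDensity_pos hs₂ m₂ x
  have hC0 : 0 ≤ C := nonneg_of_mul_nonneg_left ((abs_nonneg _).trans (hC x)) (by positivity)
  have hweight : p * (1 - p) * (gaussDensity m₁ s₁ x + gaussDensity m₂ s₂ x)
      ≤ p * gaussDensity m₁ s₁ x + (1 - p) * gaussDensity m₂ s₂ x := by
    nlinarith [mul_nonneg (mul_nonneg hp0 hp0) hφ₁.le, mul_nonneg (mul_nonneg hq hq) hφ₂.le]
  rw [setIntegral_Ioi_sub_mean_mul_mixture hs₁ hs₂]
  calc |p * s₁ ^ 2 * gaussDensity m₁ s₁ x + (1 - p) * s₂ ^ 2 * gaussDensity m₂ s₂ x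
        + p * (1 - p) * (m₁ - m₂) * (gaussTail m₁ s₁ x - gaussTail m₂ s₂ x)|
      ≤ p * s₁ ^ 2 * gaussDensity m₁ s₁ x + (1 - p) * s₂ ^ 2 * gaussDensity m₂ s₂ x
        + |m₁ - m₂| * (p * (1 - p) * |gaussTail m₁ s₁ x - gaussTail m₂ s₂ x|) := by
        refine (abs_add_le _ _).trans_eq ?_
        rw [abs_of_nonneg (by positivity), abs_mul, abs_mul, abs_of_nonneg (by positivity)]
        ring
    _ ≤ p * s₁ ^ 2 * gaussDensity m₁ s₁ x + (1 - p) * s₂ ^ 2 * gaussDensity m₂ s₂ x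
        + |m₁ - m₂| * (C * (p * (1 - p) * (gaussDensity m₁ s₁ x + gaussDensity m₂ s₂ x))) := by
        gcongr _ + _ * ?_
        rw [mul_left_comm]
        exact mul_le_mul_of_nonneg_left (hC x) (by positivity)
    _ ≤ _ := by
        nlinarith [mul_le_mul_of_nonneg_left hweight (mul_nonneg (abs_nonneg (m₁ - m₂)) hC0),
          mul_nonneg (sq_nonneg s₁) (mul_nonneg hq hφ₂.le),
          mul_nonneg (sq_nonneg s₂) (mul_nonneg hp0 hφ₁.le)]

/-- **Boundedness of the Stein kernel of a two-component Gaussian mixture.**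
Let `0 < p < 1`, `σ₁, σ₂ > 0`, let `ρ = p φ₁ + (1 - p) φ₂` be the density of the mixture of
`N(μ₁, σ₁²)` and `N(μ₂, σ₂²)`, `μ = p μ₁ + (1 - p) μ₂` its mean, and let
`τ(x) = ρ(x)⁻¹ ∫_x^∞ (y - μ) ρ(y) dy` be its Stein kernel. Then `τ` is bounded by a
constant depending only on `p, μ₁, σ₁², μ₂, σ₂²`. -/
theorem gaussian_mixture_stein_kernel_bounded
    (p : ℝ) (hp0 : 0 < p) (hp1 : p < 1)
    (μ₁ μ₂ σ₁ σ₂ : ℝ) (hσ₁ : 0 < σ₁) (hσ₂ : 0 < σ₂) :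
    ∃ C : ℝ, ∀ x : ℝ,
      |(p * gaussDensity μ₁ σ₁ x + (1 - p) * gaussDensity μ₂ σ₂ x)⁻¹ *
          ∫ y in Set.Ioi x,
            (y - (p * μ₁ + (1 - p) * μ₂)) *
              (p * gaussDensity μ₁ σ₁ y + (1 - p) * gaussDensity μ₂ σ₂ y)|
        ≤ C := by
  obtain ⟨K, hK⟩ := exists_abs_setIntegral_Ioi_sub_mean_mul_mixture_le hp0.le hp1.le
    hσ₁.ne' hσ₂.ne' μ₁ μ₂
  refine ⟨K, fun x => ?_⟩
  have hρ : 0 < p * gaussDensity μ₁ σ₁ x + (1 - p) * gaussDensity μ₂ σ₂ x := by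
    have := gaussDensity_pos hσ₁.ne' μ₁ x
    have := gaussDensity_pos hσ₂.ne' μ₂ x
    positivity
  rw [abs_mul, abs_inv, abs_of_pos hρ, inv_mul_le_iff₀ hρ]
  exact (hK x).trans_eq (mul_comm _ _)
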